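/- Suppose f : ℝ^n → ℝ is differentiable with L-Lipschitz gradient and the iterates satisfy the inclusion κ(α∇f(P_k) + p_{k+1} - p_k) + P_{k+1} - P_k = 0 with p_k ∈ ∂R(P_k) for a convex function R, κ > 0, and 0 < α < 2/(κL). Then f(P_{k+1}) + ⟨p_{k+1} - p_k, P_{k+1} - P_k⟩/α + (1/(κα) - L/2)‖P_{k+1} - P_k‖² ≤ f(P_k). -/

import Mathlib

open scoped RealInnerProductSpace

theorem inner_eq_neg_inv_mul_norm_sq_of_smul_add_eq_zero {E : Type*} [NormedAddCommGroup E]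
    [InnerProductSpace ℝ E] {κ : ℝ} (hκ : κ ≠ 0) {v d : E} (h : κ • v + d = 0) :
    ⟪v, d⟫ = -κ⁻¹ * ‖d‖ ^ 2 := by
  have hv : v = -κ⁻¹ • d := by
    rw [neg_smul, eq_neg_iff_add_eq_zero, ← smul_right_inj hκ, smul_add, smul_smul,
      mul_inv_cancel₀ hκ, one_smul, h, smul_zero]
  rw [hv, real_inner_smul_left, real_inner_self_eq_norm_sq]

theorem sufficient_descent_step_general {n : ℕ}
    (f : EuclideanSpace ℝ (Fin n) → ℝ)
    (gradf : EuclideanSpace ℝ (Fin n) → EuclideanSpace ℝ (Fin n))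
    (L : ℝ)
    (hdesc : ∀ x y, f y ≤ f x + ⟪gradf x, y - x⟫ + (L / 2) * ‖y - x‖ ^ 2)
    (κ α : ℝ) (hκ : 0 < κ) (hα : 0 < α)
    (Pk Pk1 pk pk1 : EuclideanSpace ℝ (Fin n))
    (hiter : κ • (α • gradf Pk + pk1 - pk) + (Pk1 - Pk) = 0) :
    f Pk1 + ⟪pk1 - pk, Pk1 - Pk⟫ / α + (1 / (κ * α) - L / 2) * ‖Pk1 - Pk‖ ^ 2
      ≤ f Pk := by
  set d := Pk1 - Pk
  have hstep : α * ⟪gradf Pk, d⟫ + ⟪pk1 - pk, d⟫ = -κ⁻¹ * ‖d‖ ^ 2 := by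
    rw [← inner_eq_neg_inv_mul_norm_sq_of_smul_add_eq_zero hκ.ne' hiter, add_sub_assoc,
      inner_add_left, real_inner_smul_left]
  have hgrad_step : ⟪gradf Pk, d⟫ = -(⟪pk1 - pk, d⟫ / α + 1 / (κ * α) * ‖d‖ ^ 2) := by
    field_simp at hstep ⊢
    linarith
  linarith [hdesc Pk Pk1]

/-- Sufficient descent for one step of the iteration
`κ(α∇f(P_k) + p_{k+1} - p_k) + P_{k+1} - P_k = 0` with `p_k ∈ ∂R(P_k)`,
when `∇f` is `L`-Lipschitz and `0 < α < 2/(κL)`. -/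
theorem sufficient_descent_step {n : ℕ}
    (f : EuclideanSpace ℝ (Fin n) → ℝ)
    (gradf : EuclideanSpace ℝ (Fin n) → EuclideanSpace ℝ (Fin n))
    (hgrad : ∀ x, HasGradientAt f (gradf x) x)
    (L : ℝ) (hL : 0 < L)
    (hlip : ∀ x y, ‖gradf x - gradf y‖ ≤ L * ‖x - y‖)
    (hdesc : ∀ x y, f y ≤ f x + ⟪gradf x, y - x⟫ + (L / 2) * ‖y - x‖ ^ 2)
    (R : EuclideanSpace ℝ (Fin n) → ℝ)
    (hR : ConvexOn ℝ Set.univ R)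
    (κ α : ℝ) (hκ : 0 < κ) (hα : 0 < α) (hακ : α < 2 / (κ * L))
    (Pk Pk1 pk pk1 : EuclideanSpace ℝ (Fin n))
    (hpk : ∀ U, R Pk + ⟪pk, U - Pk⟫ ≤ R U)
    (hpk1 : ∀ U, R Pk1 + ⟪pk1, U - Pk1⟫ ≤ R U)
    (hiter : κ • (α • gradf Pk + pk1 - pk) + (Pk1 - Pk) = 0) :
    f Pk1 + ⟪pk1 - pk, Pk1 - Pk⟫ / α + (1 / (κ * α) - L / 2) * ‖Pk1 - Pk‖ ^ 2
      ≤ f Pk :=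
  sufficient_descent_step_general f gradf L hdesc κ α hκ hα Pk Pk1 pk pk1 hiter
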